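/- arXiv:1803.10809 — 2 statements merged into one kernel-verified Lean document; each statement's English description precedes it below -/
import Mathlib

section
/- For any fixed a > 0, the limit as r → ∞ of r²·(π − 3·arccos(cosh(a/r)/(cosh(a/r)+1))) equals (√3/4)·a². -/
/-!
By Gauss–Bonnet, `π - 3 arccos (cosh t / (cosh t + 1))` is the area of an equilateral triangle of
side `t` in the hyperbolic plane of curvature `-1`; in curvature radius `r` a triangle of side `a`
has area `r²` times that of side `a / r`, so the limit is `a²` times the limit of `area t / t²` as
`t → 0⁺`. The area vanishes at `t = 0` (the angles are then `π / 3`), and one application of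
l'Hôpital's rule turns `area t / t²` into `sinh t / t` times a factor continuous at `0`, where it
equals `√3 / 4`.
-/

open Real Filter Topology Set

-- Each angle is `arccos (cosh t / (cosh t + 1))` by the hyperbolic law of cosines.
noncomputable def hyperbolicEquilateralArea (t : ℝ) : ℝ :=
  π - 3 * arccos (cosh t / (cosh t + 1))

lemma arccos_one_half : arccos (1 / 2) = π / 3 := by
  rw [← cos_pi_div_three, arccos_cos (by positivity) (by linarith [pi_pos])]

lemma hyperbolicEquilateralArea_zero : hyperbolicEquilateralArea 0 = 0 := by
  norm_num [hyperbolicEquilateralArea, arccos_one_half]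
  ring

lemma continuous_hyperbolicEquilateralArea : Continuous hyperbolicEquilateralArea := by
  unfold hyperbolicEquilateralArea
  have : ∀ t, cosh t + 1 ≠ 0 := fun t => by linarith [one_le_cosh t]
  fun_prop (disch := exact this _)

lemma hasDerivAt_hyperbolicEquilateralArea (x : ℝ) :
    HasDerivAt hyperbolicEquilateralArea
      (3 * sinh x / ((cosh x + 1) * √(2 * cosh x + 1))) x := by
  have hc : 1 ≤ cosh x := one_le_cosh x
  have hc1 : 0 < cosh x + 1 := by linarith
  set u := cosh x / (cosh x + 1) with hu
  have hu1 : u < 1 := by rw [hu, div_lt_one hc1]; linarith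
  have hu0 : 0 < u := by positivity
  have hquot : HasDerivAt (fun t => cosh t / (cosh t + 1)) (sinh x / (cosh x + 1) ^ 2) x := by
    refine ((hasDerivAt_cosh x).div ((hasDerivAt_cosh x).add_const 1) hc1.ne').congr_deriv ?_
    ring
  have hsqrt : √(1 - u ^ 2) = √(2 * cosh x + 1) / (cosh x + 1) := by
    rw [show 1 - u ^ 2 = (2 * cosh x + 1) / (cosh x + 1) ^ 2 by rw [hu]; field_simp; ring,
      sqrt_div (by linarith), sqrt_sq hc1.le]
  refine ((((hasDerivAt_arccos (by linarith) hu1.ne).comp x hquot).const_mul 3).const_sub π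
    ).congr_deriv ?_
  have : 0 < √(2 * cosh x + 1) := sqrt_pos.mpr (by linarith)
  rw [hsqrt]
  field_simp

lemma tendsto_sinh_div_self : Tendsto (fun x => sinh x / x) (𝓝[≠] 0) (𝓝 1) := by
  have := (hasDerivAt_sinh 0).tendsto_slope_zero
  simp only [cosh_zero, zero_add, sinh_zero, sub_zero, smul_eq_mul] at this
  simpa only [div_eq_inv_mul] using this

lemma tendsto_hyperbolicEquilateralArea_div_sq :
    Tendsto (fun t => hyperbolicEquilateralArea t / t ^ 2) (𝓝[>] 0) (𝓝 (√3 / 4)) := by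
  have hfactor : Tendsto (fun x => 3 / (2 * ((cosh x + 1) * √(2 * cosh x + 1)))) (𝓝[>] 0)
      (𝓝 (√3 / 4)) := by
    have hcont : ContinuousAt (fun x => 3 / (2 * ((cosh x + 1) * √(2 * cosh x + 1)))) 0 := by
      refine continuousAt_const.div (by fun_prop) ?_
      norm_num
    convert hcont.continuousWithinAt.tendsto using 2
    have h3 : √3 * √3 = 3 := mul_self_sqrt (by norm_num)
    have : 0 < √3 := by positivity
    norm_num
    field_simp
    linarith
  refine HasDerivAt.lhopital_zero_nhdsGT (g' := fun x => 2 * x)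
    (Eventually.of_forall hasDerivAt_hyperbolicEquilateralArea)
    (Eventually.of_forall fun x => by simpa using hasDerivAt_pow 2 x)
    (eventually_nhdsWithin_of_forall fun x (hx : 0 < x) => by positivity) ?_ ?_ ?_
  · simpa [hyperbolicEquilateralArea_zero] using
      continuous_hyperbolicEquilateralArea.continuousWithinAt.tendsto (s := Ioi 0) (x := 0)
  · simpa using ((continuous_pow 2).tendsto' (0 : ℝ) 0 (by simp)).mono_left nhdsWithin_le_nhds
  · have := (tendsto_sinh_div_self.mono_left (nhdsGT_le_nhdsNE 0)).mul hfactor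
    rw [one_mul] at this
    refine this.congr' (eventually_nhdsWithin_of_forall fun x (hx : 0 < x) => ?_)
    have : 0 < √(2 * cosh x + 1) := sqrt_pos.mpr (by linarith [one_le_cosh x])
    have : 0 < cosh x + 1 := by linarith [one_le_cosh x]
    field_simp

lemma tendsto_sq_mul_comp_div_atTop {g : ℝ → ℝ} {L a : ℝ} (ha : 0 < a)
    (hg : Tendsto (fun t => g t / t ^ 2) (𝓝[>] 0) (𝓝 L)) :
    Tendsto (fun r => r ^ 2 * g (a / r)) atTop (𝓝 (L * a ^ 2)) := by
  have hscale : Tendsto (fun r => a / r) atTop (𝓝[>] 0) :=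
    tendsto_nhdsWithin_iff.mpr ⟨tendsto_const_nhds.div_atTop tendsto_id,
      eventually_gt_atTop 0 |>.mono fun r hr => div_pos ha hr⟩
  refine ((hg.comp hscale).mul_const (a ^ 2)).congr' ?_
  filter_upwards [eventually_gt_atTop 0] with r hr
  simp only [Function.comp_apply]
  field_simp

theorem stmt_7 (a : ℝ) (ha : 0 < a) :
    Filter.Tendsto (fun r : ℝ =>
      r ^ 2 * (Real.pi - 3 * Real.arccos (Real.cosh (a / r) / (Real.cosh (a / r) + 1))))
      Filter.atTop (nhds (Real.sqrt 3 / 4 * a ^ 2)) :=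
  tendsto_sq_mul_comp_div_atTop ha tendsto_hyperbolicEquilateralArea_div_sq
end

section
/- For every r > 0 and 0 < a < 2r·arctan(√2), the spherical volume satisfies 12r³·∫₀^{tan(a/(2r))} t·arctan(t)/((3 − t²)√(2 − t²)) dt > (√2/12)·a³, and for every r > 0, a > 0 the hyperbolic volume satisfies 12r³·∫₀^{tanh(a/(2r))} t·artanh(t)/((3 + t²)√(2 + t²)) dt < (√2/12)·a³. -/
/-!
Put `x = a / (2r)`, so that `(√2/12) a³ = 12 r³ · (√2/18) x³`, and let `φ` be `arctan` in the
spherical and `artanh` in the hyperbolic case, with `T = φ⁻¹ x`. Then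
`(√2/18) x³ = ∫₀ᵀ (√2/6) φ(t)² φ'(t) dt`, and both inequalities follow by comparing integrands
on `(0, T]`: there `arctan t < t ≤ artanh t`, while
`(3 - t²) √(2 - t²) < 3√2 (1 + t²)` and `(3 + t²) √(2 + t²) > 3√2 (1 - t²)`.
-/

/-- The inverse hyperbolic tangent, `artanh x = (1/2) * log ((1+x)/(1-x))`. -/
noncomputable def artanh (x : ℝ) : ℝ := (1 / 2) * Real.log ((1 + x) / (1 - x))

open Set intervalIntegral

lemma artanh_zero : artanh 0 = 0 := by simp [artanh]

lemma artanh_eq_real_artanh {x : ℝ} (hx : x ∈ Icc (-1) 1) : artanh x = Real.artanh x :=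
  (Real.artanh_eq_half_log hx).symm

lemma artanh_tanh (x : ℝ) : artanh (Real.tanh x) = x := by
  rw [artanh_eq_real_artanh (Ioo_subset_Icc_self (Real.tanh_bijOn.mapsTo trivial)),
    Real.artanh_tanh]

lemma artanh_eq_half_log_sub_log {t : ℝ} (h₁ : -1 < t) (h₂ : t < 1) :
    artanh t = 1 / 2 * (Real.log (1 + t) - Real.log (1 - t)) := by
  rw [artanh, Real.log_div (by linarith) (by linarith)]

lemma hasDerivAt_artanh {t : ℝ} (h₁ : -1 < t) (h₂ : t < 1) :
    HasDerivAt artanh (1 / (1 - t ^ 2)) t := by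
  have hlog := ((((hasDerivAt_id t).const_add 1).log (by simp; linarith)).sub
      (((hasDerivAt_id t).const_sub 1).log (by simp; linarith))).const_mul (1 / 2 : ℝ)
  refine (hlog.congr_of_eventuallyEq ?_).congr_deriv ?_
  · filter_upwards [Ioo_mem_nhds h₁ h₂] with x hx
    simp [artanh_eq_half_log_sub_log hx.1 hx.2]
  · have : (1 : ℝ) - t ^ 2 = (1 + t) * (1 - t) := by ring
    rw [id, this]
    field_simp [show (1 : ℝ) + t ≠ 0 by linarith, show (1 : ℝ) - t ≠ 0 by linarith]
    ring

lemma continuousOn_artanh : ContinuousOn artanh (Ioo (-1) 1) :=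
  fun _ ht => (hasDerivAt_artanh ht.1 ht.2).continuousAt.continuousWithinAt

lemma self_le_artanh {t : ℝ} (h₀ : 0 ≤ t) (h₁ : t < 1) : t ≤ artanh t := by
  have hsum := Real.hasSum_log_sub_log_of_abs_lt_one (abs_lt.2 ⟨by linarith, h₁⟩)
  have hfirst := le_hasSum hsum 0 fun k _ => by positivity
  rw [artanh_eq_half_log_sub_log (by linarith) h₁]
  norm_num at hfirst
  linarith

lemma arctan_lt_self {t : ℝ} (ht : 0 < t) : Real.arctan t < t := by
  simpa [Real.tan_arctan] using
    Real.lt_tan (Real.arctan_pos.2 ht) (Real.arctan_lt_pi_div_two t)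

lemma tanh_pos {x : ℝ} (hx : 0 < x) : 0 < Real.tanh x := by
  rw [Real.tanh_eq_sinh_div_cosh]
  exact div_pos (Real.sinh_pos_iff.2 hx) (Real.cosh_pos x)

lemma integral_sq_mul_deriv {φ φ' : ℝ → ℝ} {a b : ℝ}
    (hφ : ∀ t ∈ uIcc a b, HasDerivAt φ (φ' t) t) (hφ' : ContinuousOn φ' (uIcc a b)) :
    ∫ t in a..b, φ t ^ 2 * φ' t = (φ b ^ 3 - φ a ^ 3) / 3 := by
  have := integral_comp_mul_deriv hφ hφ' (continuous_pow 2)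
  simp only [Function.comp_def] at this
  rw [this, integral_pow]
  norm_num

noncomputable def sphericalIntegrand (t : ℝ) : ℝ :=
  t * Real.arctan t / ((3 - t ^ 2) * √(2 - t ^ 2))

noncomputable def hyperbolicIntegrand (t : ℝ) : ℝ :=
  t * artanh t / ((3 + t ^ 2) * √(2 + t ^ 2))

lemma continuousOn_sphericalIntegrand : ContinuousOn sphericalIntegrand (Ioo (-√2) √2) := by
  intro t ht
  have ht2 : t ^ 2 < 2 := Real.sq_lt.2 ht
  have : 0 < √(2 - t ^ 2) := Real.sqrt_pos.2 (by linarith)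
  unfold sphericalIntegrand
  refine ContinuousAt.continuousWithinAt (ContinuousAt.div ?_ ?_ ?_)
  · fun_prop
  · fun_prop
  · nlinarith

lemma continuousOn_hyperbolicIntegrand : ContinuousOn hyperbolicIntegrand (Ioo (-1) 1) := by
  unfold hyperbolicIntegrand
  refine ContinuousOn.div (continuousOn_id.mul continuousOn_artanh) (by fun_prop) ?_
  intro t _
  positivity

lemma lt_sphericalIntegrand {t : ℝ} (h₀ : 0 < t) (h : t < √2) :
    √2 / 6 * (Real.arctan t ^ 2 * (1 / (1 + t ^ 2))) < sphericalIntegrand t := by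
  set A := Real.arctan t
  have hA₀ : 0 < A := Real.arctan_pos.2 h₀
  have hAt : A ^ 2 ≤ t * A := by nlinarith [arctan_lt_self h₀]
  have ht2 : t ^ 2 < 2 := Real.sq_lt.2 ⟨by linarith [Real.sqrt_nonneg 2], h⟩
  have hS : √(2 - t ^ 2) ≤ √2 := Real.sqrt_le_sqrt (by linarith [sq_nonneg t])
  have h3 : 0 ≤ 3 - t ^ 2 := by linarith
  have hs : √2 * √2 = 2 := Real.mul_self_sqrt zero_le_two
  unfold sphericalIntegrand
  rw [lt_div_iff₀ (mul_pos (by linarith) (Real.sqrt_pos.2 (by linarith)))]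
  calc √2 / 6 * (A ^ 2 * (1 / (1 + t ^ 2))) * ((3 - t ^ 2) * √(2 - t ^ 2))
      ≤ √2 / 6 * (t * A * (1 / (1 + t ^ 2))) * (3 * √2) := by
        gcongr
        linarith [sq_nonneg t]
    _ = t * A * (1 / (1 + t ^ 2)) := by linear_combination (t * A * (1 / (1 + t ^ 2)) / 2) * hs
    _ < t * A := by
        refine mul_lt_of_lt_one_right (by positivity) ?_
        rw [div_lt_one (by positivity)]
        nlinarith

lemma hyperbolicIntegrand_lt {t : ℝ} (h₀ : 0 < t) (h₁ : t < 1) :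
    hyperbolicIntegrand t < √2 / 6 * (artanh t ^ 2 * (1 / (1 - t ^ 2))) := by
  set A := artanh t
  have hA : t ≤ A := self_le_artanh h₀.le h₁
  have hAt : t * A ≤ A ^ 2 := by nlinarith
  have h1t : 0 < 1 - t ^ 2 := by nlinarith
  have hS : √2 ≤ √(2 + t ^ 2) := Real.sqrt_le_sqrt (by nlinarith)
  have hs : √2 * √2 = 2 := Real.mul_self_sqrt zero_le_two
  unfold hyperbolicIntegrand
  rw [div_lt_iff₀ (by positivity)]
  calc t * A < t * A * (1 / (1 - t ^ 2)) := by
        refine lt_mul_of_one_lt_right (by nlinarith) ?_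
        rw [one_lt_div h1t]
        nlinarith
    _ = √2 / 6 * (t * A * (1 / (1 - t ^ 2))) * (3 * √2) := by
        linear_combination (-(t * A * (1 / (1 - t ^ 2))) / 2) * hs
    _ ≤ √2 / 6 * (A ^ 2 * (1 / (1 - t ^ 2))) * ((3 + t ^ 2) * √(2 + t ^ 2)) := by
        gcongr
        nlinarith

lemma lt_integral_sphericalIntegrand {x : ℝ} (hx₀ : 0 < x) (hx : x < Real.arctan √2) :
    √2 / 18 * x ^ 3 < ∫ t in (0 : ℝ)..Real.tan x, sphericalIntegrand t := by
  have hxπ : x < Real.pi / 2 := hx.trans (Real.arctan_lt_pi_div_two _)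
  set T := Real.tan x
  have hT₀ : 0 < T := Real.tan_pos_of_pos_of_lt_pi_div_two hx₀ hxπ
  have hT : T < √2 := by
    simpa [Real.tan_arctan] using Real.tan_lt_tan_of_nonneg_of_lt_pi_div_two hx₀.le
      (Real.arctan_lt_pi_div_two _) hx
  have hIcc : Icc 0 T ⊆ Ioo (-√2) √2 := fun t ht =>
    ⟨by linarith [ht.1, Real.sqrt_pos.2 zero_lt_two], ht.2.trans_lt hT⟩
  have hderiv_cont : Continuous fun t : ℝ => 1 / (1 + t ^ 2) :=
    continuous_const.div (by fun_prop) fun t => by positivity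
  have hcube : ∫ t in (0 : ℝ)..T, √2 / 6 * (Real.arctan t ^ 2 * (1 / (1 + t ^ 2)))
      = √2 / 18 * x ^ 3 := by
    rw [integral_const_mul, integral_sq_mul_deriv (fun t _ => Real.hasDerivAt_arctan t)
      hderiv_cont.continuousOn, Real.arctan_tan (by linarith [Real.pi_pos]) hxπ,
      Real.arctan_zero]
    ring
  rw [← hcube]
  exact integral_lt_integral_of_continuousOn_of_le_of_exists_lt hT₀
    (continuous_const.mul ((Real.continuous_arctan.pow 2).mul hderiv_cont)).continuousOn
    (continuousOn_sphericalIntegrand.mono hIcc)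
    (fun t ht => (lt_sphericalIntegrand ht.1 (ht.2.trans_lt hT)).le)
    ⟨T, right_mem_Icc.2 hT₀.le, lt_sphericalIntegrand hT₀ hT⟩

lemma integral_hyperbolicIntegrand_lt {x : ℝ} (hx₀ : 0 < x) :
    ∫ t in (0 : ℝ)..Real.tanh x, hyperbolicIntegrand t < √2 / 18 * x ^ 3 := by
  set T := Real.tanh x
  have hT₀ : 0 < T := tanh_pos hx₀
  have hIcc : Icc 0 T ⊆ Ioo (-1) 1 := fun t ht =>
    ⟨by linarith [ht.1], ht.2.trans_lt (Real.tanh_lt_one x)⟩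
  have hderiv : ∀ t ∈ Icc 0 T, HasDerivAt artanh (1 / (1 - t ^ 2)) t := fun t ht =>
    hasDerivAt_artanh (hIcc ht).1 (hIcc ht).2
  have hderiv_cont : ContinuousOn (fun t : ℝ => 1 / (1 - t ^ 2)) (Icc 0 T) := by
    refine ContinuousOn.div (by fun_prop) (by fun_prop) fun t ht => ?_
    nlinarith [(hIcc ht).1, (hIcc ht).2]
  have hcube : ∫ t in (0 : ℝ)..T, √2 / 6 * (artanh t ^ 2 * (1 / (1 - t ^ 2)))
      = √2 / 18 * x ^ 3 := by
    rw [← uIcc_of_le hT₀.le] at hderiv hderiv_cont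
    rw [integral_const_mul, integral_sq_mul_deriv hderiv hderiv_cont, artanh_tanh, artanh_zero]
    ring
  rw [← hcube]
  exact integral_lt_integral_of_continuousOn_of_le_of_exists_lt hT₀
    (continuousOn_hyperbolicIntegrand.mono hIcc)
    (continuousOn_const.mul (((continuousOn_artanh.mono hIcc).pow 2).mul hderiv_cont))
    (fun t ht => (hyperbolicIntegrand_lt ht.1 (hIcc (Ioc_subset_Icc_self ht)).2).le)
    ⟨T, right_mem_Icc.2 hT₀.le, hyperbolicIntegrand_lt hT₀ (Real.tanh_lt_one x)⟩

lemma sqrt_two_div_twelve_mul_cube_eq {r : ℝ} (a : ℝ) (hr : r ≠ 0) :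
    √2 / 12 * a ^ 3 = 12 * r ^ 3 * (√2 / 18 * (a / (2 * r)) ^ 3) := by
  field_simp
  ring

theorem stmt_16 :
    (∀ r a : ℝ, 0 < r → 0 < a → a < 2 * r * Real.arctan (Real.sqrt 2) →
      12 * r ^ 3 * ∫ t in (0 : ℝ)..(Real.tan (a / (2 * r))),
        t * Real.arctan t / ((3 - t ^ 2) * Real.sqrt (2 - t ^ 2)) >
        Real.sqrt 2 / 12 * a ^ 3) ∧
    (∀ r a : ℝ, 0 < r → 0 < a →
      12 * r ^ 3 * ∫ t in (0 : ℝ)..(Real.tanh (a / (2 * r))),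
        t * artanh t / ((3 + t ^ 2) * Real.sqrt (2 + t ^ 2)) <
        Real.sqrt 2 / 12 * a ^ 3) := by
  constructor
  · intro r a hr ha hlt
    have hx : a / (2 * r) < Real.arctan √2 := by
      rw [div_lt_iff₀ (by positivity)]
      linarith
    rw [gt_iff_lt, sqrt_two_div_twelve_mul_cube_eq a hr.ne']
    exact mul_lt_mul_of_pos_left (lt_integral_sphericalIntegrand (by positivity) hx)
      (by positivity)
  · intro r a hr ha
    rw [sqrt_two_div_twelve_mul_cube_eq a hr.ne']
    exact mul_lt_mul_of_pos_left (integral_hyperbolicIntegrand_lt (by positivity)) (by positivity)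
end
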